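/- Let p be a real number and let ρ(p) be viewed as a matrix in Matrix (Fin 2) (Fin 2) ℂ. There exist nonnegative real numbers x₁, …, x₆ with x₁ + ⋯ + x₆ = 1 and ρ(p) = x₁·P₀ + x₂·P₁ + x₃·P₊ + x₄·P₋ + x₅·P₊ᵢ + x₆·P₋ᵢ (a convex combination of the six single-qubit stabilizer projectors) if and only if (1 − tan(π/8))/2 ≤ p ≤ (1 + tan(π/8))/2, i.e., if and only if |1 − 2p| ≤ tan(π/8). -/

import Mathlib

open Real

/-- The stabilizer projector `P₀ = |0⟩⟨0|`. -/
noncomputable def P0c : Matrix (Fin 2) (Fin 2) ℂ := !![1, 0; 0, 0]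

/-- The stabilizer projector `P₁ = |1⟩⟨1|`. -/
noncomputable def P1c : Matrix (Fin 2) (Fin 2) ℂ := !![0, 0; 0, 1]

/-- The stabilizer projector `P₊ = |+⟩⟨+|`. -/
noncomputable def Pplusc : Matrix (Fin 2) (Fin 2) ℂ := !![1/2, 1/2; 1/2, 1/2]

/-- The stabilizer projector `P₋ = |−⟩⟨−|`. -/
noncomputable def Pminusc : Matrix (Fin 2) (Fin 2) ℂ := !![1/2, -(1/2); -(1/2), 1/2]

/-- The stabilizer projector `P₊ᵢ = |+i⟩⟨+i|`. -/
noncomputable def Pplusi : Matrix (Fin 2) (Fin 2) ℂ :=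
  !![1/2, -Complex.I/2; Complex.I/2, 1/2]

/-- The stabilizer projector `P₋ᵢ = |−i⟩⟨−i|`. -/
noncomputable def Pminusi : Matrix (Fin 2) (Fin 2) ℂ :=
  !![1/2, Complex.I/2; -Complex.I/2, 1/2]

/-- The dephased magic state, viewed as a complex matrix. -/
noncomputable def ρdephc (p : ℝ) : Matrix (Fin 2) (Fin 2) ℂ :=
  !![((cos (π/8) ^ 2 : ℝ) : ℂ), (((1 - 2*p) * cos (π/8) * sin (π/8) : ℝ) : ℂ);
     (((1 - 2*p) * cos (π/8) * sin (π/8) : ℝ) : ℂ), ((sin (π/8) ^ 2 : ℝ) : ℂ)]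

/-!
In Bloch coordinates the six stabilizer states are the vertices `±eₓ, ±e_y, ±e_z` of the
octahedron `|a| + |b| + |c| ≤ 1`, so a qubit state is a mixture of them iff its Bloch vector lies
in that octahedron. The dephased magic state has Bloch vector `((1 - 2p) sin (π/4), 0, cos (π/4))`,
and for `0 < θ ≤ π/4` the octahedron inequality `|t| sin 2θ + cos 2θ ≤ 1` is, by the half-angle
formulas, `|t| ≤ tan θ`.
-/

open Complex in
/-- The qubit state with Bloch vector `(a, b, c)`, i.e. `(1 + a σₓ + b σ_y + c σ_z) / 2`. -/
noncomputable def blochMatrix (a b c : ℝ) : Matrix (Fin 2) (Fin 2) ℂ :=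
  !![(1 + c) / 2, (a - b * I) / 2; (a + b * I) / 2, (1 - c) / 2]

noncomputable def stabilizerMixture (x : Fin 6 → ℝ) : Matrix (Fin 2) (Fin 2) ℂ :=
  x 0 • P0c + x 1 • P1c + x 2 • Pplusc + x 3 • Pminusc + x 4 • Pplusi + x 5 • Pminusi

lemma blochMatrix_injective {a b c a' b' c' : ℝ} (h : blochMatrix a b c = blochMatrix a' b' c') :
    a = a' ∧ b = b' ∧ c = c' := by
  refine ⟨?_, ?_, ?_⟩
  · simpa [blochMatrix] using congrArg (fun M => (M 1 0).re) h
  · simpa [blochMatrix] using congrArg (fun M => (M 1 0).im) h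
  · simpa [blochMatrix] using congrArg (fun M => (M 0 0).re) h

lemma stabilizerMixture_eq_blochMatrix {x : Fin 6 → ℝ} (hx : ∑ i, x i = 1) :
    stabilizerMixture x = blochMatrix (x 2 - x 3) (x 4 - x 5) (x 0 - x 1) := by
  have h0 : x 0 = 1 - x 1 - x 2 - x 3 - x 4 - x 5 := by
    rw [Fin.sum_univ_six] at hx
    linarith
  ext i j
  fin_cases i <;> fin_cases j <;>
    simp [stabilizerMixture, blochMatrix, P0c, P1c, Pplusc, Pminusc, Pplusi, Pminusi,
      Complex.real_smul, h0] <;> ring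

theorem exists_stabilizerMixture_eq_blochMatrix_iff (a b c : ℝ) :
    (∃ x : Fin 6 → ℝ, (∀ i, 0 ≤ x i) ∧ ∑ i, x i = 1 ∧ blochMatrix a b c = stabilizerMixture x) ↔
      |a| + |b| + |c| ≤ 1 := by
  constructor
  · rintro ⟨x, hx, hsum, h⟩
    obtain ⟨rfl, rfl, rfl⟩ :=
      blochMatrix_injective (h.trans (stabilizerMixture_eq_blochMatrix hsum))
    have h23 : |x 2 - x 3| ≤ x 2 + x 3 := abs_sub_le_iff.2 ⟨by linarith [hx 3], by linarith [hx 2]⟩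
    have h45 : |x 4 - x 5| ≤ x 4 + x 5 := abs_sub_le_iff.2 ⟨by linarith [hx 5], by linarith [hx 4]⟩
    have h01 : |x 0 - x 1| ≤ x 0 + x 1 := abs_sub_le_iff.2 ⟨by linarith [hx 1], by linarith [hx 0]⟩
    rw [Fin.sum_univ_six] at hsum
    linarith
  · intro h
    set e := 1 - (|a| + |b| + |c|)
    set x : Fin 6 → ℝ := ![(|c| + c + e) / 2, (|c| - c + e) / 2, (|a| + a) / 2, (|a| - a) / 2,
      (|b| + b) / 2, (|b| - b) / 2]
    have hsum : ∑ i, x i = 1 := by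
      simp only [Fin.sum_univ_six, x, e]
      dsimp
      ring
    refine ⟨x, ?_, hsum, ?_⟩
    · intro i
      fin_cases i <;> dsimp [x] <;>
        linarith [le_abs_self a, neg_abs_le a, le_abs_self b, neg_abs_le b, le_abs_self c,
          neg_abs_le c]
    · rw [stabilizerMixture_eq_blochMatrix hsum]
      congr 1 <;> dsimp [x] <;> ring

lemma ρdephc_eq_blochMatrix (p : ℝ) :
    ρdephc p = blochMatrix ((1 - 2 * p) * sin (2 * (π / 8))) 0 (cos (2 * (π / 8))) := by
  ext i j
  fin_cases i <;> fin_cases j <;>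
    simp [ρdephc, blochMatrix, cos_sq (π / 8), sin_sq (π / 8), sin_two_mul, -cos_pi_div_eight,
      -sin_pi_div_eight, -Complex.ofReal_cos, -Complex.ofReal_sin] <;> ring

lemma abs_mul_sin_two_mul_add_abs_cos_two_mul_le_one_iff {θ : ℝ} (t : ℝ) (hθ₀ : 0 < θ)
    (hθ : θ ≤ π / 4) : |t * sin (2 * θ)| + |cos (2 * θ)| ≤ 1 ↔ |t| ≤ tan θ := by
  have hs : 0 < sin θ := sin_pos_of_pos_of_lt_pi hθ₀ (by linarith [pi_pos])
  have hc : 0 < cos θ := cos_pos_of_mem_Ioo ⟨by linarith [pi_pos], by linarith⟩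
  have hcos2 : 0 ≤ cos (2 * θ) := cos_nonneg_of_mem_Icc ⟨by linarith [pi_pos], by linarith⟩
  rw [abs_of_nonneg hcos2, abs_mul, sin_two_mul,
    abs_of_pos (by positivity : 0 < 2 * sin θ * cos θ), cos_two_mul', tan_eq_sin_div_cos,
    le_div_iff₀ hc]
  -- using `1 = sin θ ^ 2 + cos θ ^ 2`, the left side is `2 sin θ * (|t| cos θ - sin θ) ≤ 0`
  constructor <;> intro h <;> nlinarith [sin_sq_add_cos_sq θ]

theorem stmt_10 (p : ℝ) :
    (∃ x : Fin 6 → ℝ, (∀ i, 0 ≤ x i) ∧ (∑ i, x i) = 1 ∧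
      ρdephc p = x 0 • P0c + x 1 • P1c + x 2 • Pplusc + x 3 • Pminusc
          + x 4 • Pplusi + x 5 • Pminusi)
    ↔ |1 - 2*p| ≤ tan (π/8) := by
  rw [ρdephc_eq_blochMatrix]
  refine (exists_stabilizerMixture_eq_blochMatrix_iff _ _ _).trans ?_
  rw [abs_zero, add_zero]
  exact abs_mul_sin_two_mul_add_abs_cos_two_mul_le_one_iff _ (by positivity) (by linarith [pi_pos])
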